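/- Every fair division instance with matroid-rank valuations admits a partial allocation, with each bundle independent in the respective agent's matroid, that simultaneously maximizes social welfare over all n-partitions of the goods and satisfies the pairwise maximin share guarantee: v_i(A_i) ≥ μ_i(2, A_i ∪ A_j) for all agents i, j. -/

import Mathlib

/-!
Take an allocation of independent bundles of maximum total size and, among those, one minimizing
the sum of the squared bundle sizes. Since the rank of a bundle is the size of its largest
independent subset, maximum total size already means maximum welfare over all partitions.
Minimality of the squares forbids moving a good of `A j` to `A i` (keeping `A i` independent)
unless `|A j| ≤ |A i| + 1`. If some 2-partition of `A i ∪ A j` had both parts of rank `> |A i|`,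
augmenting `A i` from the first part would produce such a move, whereas the sizes of the parts
force `|A j| ≥ |A i| + 2`.
-/

structure FinMatroid (E : Type*) [Fintype E] [DecidableEq E] where
  Indep : Finset E → Prop
  empty_indep : Indep ∅
  subset_indep : ∀ ⦃I J : Finset E⦄, Indep I → J ⊆ I → Indep J
  aug : ∀ ⦃I J : Finset E⦄, Indep I → Indep J → I.card < J.card →
    ∃ g ∈ J \ I, Indep (insert g I)

noncomputable def FinMatroid.rank {E : Type*} [Fintype E] [DecidableEq E]
    (M : FinMatroid E) (S : Finset E) : ℕ :=
  sSup {t | ∃ I : Finset E, I ⊆ S ∧ M.Indep I ∧ I.card = t}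

namespace FinMatroid

variable {E : Type*} [Fintype E] [DecidableEq E] (M : FinMatroid E)

lemma bddAbove_rank_set (S : Finset E) :
    BddAbove {t | ∃ I : Finset E, I ⊆ S ∧ M.Indep I ∧ I.card = t} :=
  ⟨S.card, by rintro t ⟨I, hIS, -, rfl⟩; exact Finset.card_le_card hIS⟩

lemma card_le_rank {I S : Finset E} (hIS : I ⊆ S) (hI : M.Indep I) : I.card ≤ M.rank S :=
  le_csSup (M.bddAbove_rank_set S) ⟨I, hIS, hI, rfl⟩

lemma exists_indep_subset_card_eq_rank (S : Finset E) :
    ∃ I ⊆ S, M.Indep I ∧ I.card = M.rank S :=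
  Nat.sSup_mem (s := {t | ∃ I : Finset E, I ⊆ S ∧ M.Indep I ∧ I.card = t})
    ⟨0, ∅, Finset.empty_subset S, M.empty_indep, Finset.card_empty⟩ (M.bddAbove_rank_set S)

lemma rank_le_card (S : Finset E) : M.rank S ≤ S.card := by
  obtain ⟨I, hIS, -, hcard⟩ := M.exists_indep_subset_card_eq_rank S
  exact hcard ▸ Finset.card_le_card hIS

lemma rank_eq_card {S : Finset E} (hS : M.Indep S) : M.rank S = S.card :=
  le_antisymm (M.rank_le_card S) (M.card_le_rank le_rfl hS)

lemma exists_insert_indep_of_card_lt_rank {I S : Finset E} (hI : M.Indep I)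
    (h : I.card < M.rank S) : ∃ g ∈ S \ I, M.Indep (insert g I) := by
  obtain ⟨J, hJS, hJ, hcard⟩ := M.exists_indep_subset_card_eq_rank S
  obtain ⟨g, hg, hins⟩ := M.aug hI hJ (hcard ▸ h)
  rw [Finset.mem_sdiff] at hg
  exact ⟨g, Finset.mem_sdiff.mpr ⟨hJS hg.1, hg.2⟩, hins⟩

end FinMatroid

/-- Maximin share `μ(k, S)` for a ℕ-valued valuation `v`: the maximum over
`k`-partitions `(Y 0, …, Y (k-1))` of `S` of `min_j v (Y j)`. -/
noncomputable def mmsN {E : Type*} [Fintype E] [DecidableEq E]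
    (v : Finset E → ℕ) (k : ℕ) (S : Finset E) : ℕ :=
  sSup {t | ∃ Y : Fin k → Finset E,
    (∀ a b, a ≠ b → Disjoint (Y a) (Y b)) ∧ Finset.univ.biUnion Y = S ∧
    ∀ j, t ≤ v (Y j)}

section Allocation

variable {ι E : Type*} [Fintype E] [DecidableEq E]

lemma mmsN_le {v : Finset E → ℕ} {k : ℕ} {S : Finset E} {c : ℕ}
    (h : ∀ (t : ℕ) (Y : Fin k → Finset E), (∀ a b, a ≠ b → Disjoint (Y a) (Y b)) →
      Finset.univ.biUnion Y = S → (∀ j, t ≤ v (Y j)) → t ≤ c) :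
    mmsN v k S ≤ c :=
  csSup_le' fun _ ⟨Y, hYd, hYu, hYt⟩ => h _ Y hYd hYu hYt

lemma sum_add_eq_sum_add_of_eq_off_pair [Fintype ι] [DecidableEq ι] {M : Type*}
    [AddCommMonoid M] {f g : ι → M} {i j : ι} (hij : i ≠ j) (h : ∀ k, k ≠ i → k ≠ j → f k = g k) :
    ∑ k, f k + (g i + g j) = ∑ k, g k + (f i + f j) := by
  have hrest : ∑ k ∈ {i, j}ᶜ, f k = ∑ k ∈ {i, j}ᶜ, g k :=
    Finset.sum_congr rfl fun k hk => by
      simp only [Finset.mem_compl, Finset.mem_insert, Finset.mem_singleton, not_or] at hk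
      exact h k hk.1 hk.2
  rw [← Finset.sum_add_sum_compl {i, j} f, ← Finset.sum_add_sum_compl {i, j} g,
    Finset.sum_pair hij, Finset.sum_pair hij, hrest]
  abel

def IsIndepAllocation (Ms : ι → FinMatroid E) (A : ι → Finset E) : Prop :=
  (∀ a b, a ≠ b → Disjoint (A a) (A b)) ∧ ∀ i, (Ms i).Indep (A i)

variable {Ms : ι → FinMatroid E}

lemma exists_isIndepAllocation_max_card_min_sq [Fintype ι] :
    ∃ A, IsIndepAllocation Ms A ∧
      (∀ I, IsIndepAllocation Ms I → ∑ k, (I k).card ≤ ∑ k, (A k).card) ∧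
      (∀ I, IsIndepAllocation Ms I → ∑ k, (I k).card = ∑ k, (A k).card →
        ∑ k, (A k).card ^ 2 ≤ ∑ k, (I k).card ^ 2) := by
  have hempty : IsIndepAllocation Ms fun _ => ∅ :=
    ⟨fun _ _ _ => Finset.disjoint_empty_left _, fun i => (Ms i).empty_indep⟩
  obtain ⟨A₀, hA₀, hmax⟩ := Set.exists_max_image {A | IsIndepAllocation Ms A}
    (fun A => ∑ k, (A k).card) (Set.toFinite _) ⟨_, hempty⟩
  obtain ⟨A, ⟨hA, hAA₀⟩, hmin⟩ :=
    Set.exists_min_image {A | IsIndepAllocation Ms A ∧ ∑ k, (A k).card = ∑ k, (A₀ k).card}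
      (fun A => ∑ k, (A k).card ^ 2) (Set.toFinite _) ⟨A₀, hA₀, rfl⟩
  exact ⟨A, hA, fun I hI => hAA₀ ▸ hmax I hI, fun I hI hIA => hmin I ⟨hI, hIA.trans hAA₀⟩⟩

/-- Erasing `g` from every bundle other than `i` only affects its current owner. -/
def transfer [DecidableEq ι] (A : ι → Finset E) (i : ι) (g : E) (k : ι) : Finset E :=
  if k = i then insert g (A k) else (A k).erase g

lemma isIndepAllocation_transfer [DecidableEq ι] {A : ι → Finset E} (hA : IsIndepAllocation Ms A) {i : ι} {g : E}
    (hg : (Ms i).Indep (insert g (A i))) : IsIndepAllocation Ms (transfer A i g) := by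
  have hdisj : ∀ b, b ≠ i → Disjoint (insert g (A i)) ((A b).erase g) := fun b hb =>
    Finset.disjoint_insert_left.mpr
      ⟨Finset.notMem_erase g _, (hA.1 i b hb.symm).mono_right (Finset.erase_subset g _)⟩
  refine ⟨fun a b hab => ?_, fun k => ?_⟩
  · unfold transfer
    split_ifs with ha hb hb
    · exact absurd (ha.trans hb.symm) hab
    · exact ha ▸ hdisj b hb
    · exact hb ▸ (hdisj a ha).symm
    · exact (hA.1 a b hab).mono (Finset.erase_subset g _) (Finset.erase_subset g _)
  · unfold transfer
    split_ifs with hk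
    · exact hk ▸ hg
    · exact (Ms k).subset_indep (hA.2 k) (Finset.erase_subset g _)

/-- Otherwise moving `g` from `A j` to `A i` would strictly decrease the sum of squares. -/
lemma card_le_card_add_one_of_insert_indep [Fintype ι] [DecidableEq ι]
    {A : ι → Finset E} (hA : IsIndepAllocation Ms A)
    (hmin : ∀ I, IsIndepAllocation Ms I → ∑ k, (I k).card = ∑ k, (A k).card →
      ∑ k, (A k).card ^ 2 ≤ ∑ k, (I k).card ^ 2)
    {i j : ι} (hij : i ≠ j) {g : E} (hgj : g ∈ A j) (hg : (Ms i).Indep (insert g (A i))) :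
    (A j).card ≤ (A i).card + 1 := by
  have hnot : ∀ k, k ≠ j → g ∉ A k := fun k hkj hgk =>
    (hA.1 k j hkj).notMem_of_mem_left_finset hgk hgj
  have hi : (transfer A i g i).card = (A i).card + 1 := by
    rw [transfer, if_pos rfl, Finset.card_insert_of_notMem (hnot i hij)]
  have hj : (transfer A i g j).card = (A j).card - 1 := by
    rw [transfer, if_neg hij.symm, Finset.card_erase_of_mem hgj]
  have hrest : ∀ k, k ≠ i → k ≠ j → (transfer A i g k).card = (A k).card := fun k hki hkj => by
    rw [transfer, if_neg hki, Finset.erase_eq_of_notMem (hnot k hkj)]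
  have hsum := sum_add_eq_sum_add_of_eq_off_pair hij hrest
  have hsq := sum_add_eq_sum_add_of_eq_off_pair (f := fun k => (transfer A i g k).card ^ 2)
    (g := fun k => (A k).card ^ 2) hij fun k hki hkj => by rw [hrest k hki hkj]
  have hpos : 0 < (A j).card := Finset.card_pos.mpr ⟨g, hgj⟩
  rw [hi, hj] at hsum hsq
  have hle := hmin _ (isIndepAllocation_transfer hA hg) (by omega)
  obtain ⟨c, hc⟩ : ∃ c, (A j).card = c + 1 := ⟨_, (Nat.succ_pred_eq_of_pos hpos).symm⟩
  rw [hc, Nat.add_sub_cancel] at hsq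
  rw [hc]
  nlinarith

lemma sum_rank_le_of_forall_sum_card_le [Fintype ι] {A : ι → Finset E} (hA : IsIndepAllocation Ms A)
    (hmax : ∀ I, IsIndepAllocation Ms I → ∑ k, (I k).card ≤ ∑ k, (A k).card)
    {B : ι → Finset E} (hB : ∀ a b, a ≠ b → Disjoint (B a) (B b)) :
    ∑ k, (Ms k).rank (B k) ≤ ∑ k, (Ms k).rank (A k) := by
  choose I hIB hI hIcard using fun k => (Ms k).exists_indep_subset_card_eq_rank (B k)
  have hIalloc : IsIndepAllocation Ms I := ⟨fun a b hab => (hB a b hab).mono (hIB a) (hIB b), hI⟩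
  calc ∑ k, (Ms k).rank (B k) = ∑ k, (I k).card := by simp only [hIcard]
    _ ≤ ∑ k, (A k).card := hmax I hIalloc
    _ = ∑ k, (Ms k).rank (A k) := by simp only [(Ms _).rank_eq_card (hA.2 _)]

end Allocation

lemma FinMatroid.mmsN_two_rank_union_le {E : Type*} [Fintype E] [DecidableEq E]
    (M : FinMatroid E) {A B : Finset E} (hA : M.Indep A)
    (hbal : ∀ g ∈ B \ A, M.Indep (insert g A) → B.card ≤ A.card + 1) :
    mmsN M.rank 2 (A ∪ B) ≤ M.rank A := by
  rw [M.rank_eq_card hA]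
  refine mmsN_le fun t Y hYd hYu hYt => ?_
  by_contra! hlt
  obtain ⟨g, hg, hins⟩ := M.exists_insert_indep_of_card_lt_rank hA (hlt.trans_le (hYt 0))
  rw [Finset.mem_sdiff] at hg
  have hgAB : g ∈ A ∪ B := hYu ▸ Finset.mem_biUnion.mpr ⟨0, Finset.mem_univ _, hg.1⟩
  have hgB : g ∈ B \ A :=
    Finset.mem_sdiff.mpr ⟨(Finset.mem_union.mp hgAB).resolve_left hg.2, hg.2⟩
  have hBA := hbal g hgB hins
  have hparts : (Y 0).card + (Y 1).card = (A ∪ B).card := by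
    rw [← hYu, Finset.card_biUnion fun a _ b _ hab => hYd a b hab, Fin.sum_univ_two]
  have h0 := (hYt 0).trans (M.rank_le_card _)
  have h1 := (hYt 1).trans (M.rank_le_card _)
  have := Finset.card_union_le A B
  omega

/-- Every instance with matroid-rank valuations admits a partial allocation with
independent bundles that maximizes social welfare over all n-partitions and satisfies
the pairwise maximin share guarantee. -/
theorem stmt12 {n m : ℕ} (Ms : Fin n → FinMatroid (Fin m)) :
    ∃ A : Fin n → Finset (Fin m),
      (∀ a b, a ≠ b → Disjoint (A a) (A b)) ∧
      (∀ i, (Ms i).Indep (A i)) ∧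
      (∀ B : Fin n → Finset (Fin m),
        (∀ a b, a ≠ b → Disjoint (B a) (B b)) → Finset.univ.biUnion B = Finset.univ →
        ∑ k, (Ms k).rank (B k) ≤ ∑ k, (Ms k).rank (A k)) ∧
      (∀ i j, mmsN (Ms i).rank 2 (A i ∪ A j) ≤ (Ms i).rank (A i)) := by
  obtain ⟨A, hA, hmax, hmin⟩ := exists_isIndepAllocation_max_card_min_sq (Ms := Ms)
  refine ⟨A, hA.1, hA.2, fun B hB _ => sum_rank_le_of_forall_sum_card_le hA hmax hB,
    fun i j => (Ms i).mmsN_two_rank_union_le (hA.2 i) fun g hg hins => ?_⟩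
  rw [Finset.mem_sdiff] at hg
  have hij : i ≠ j := by rintro rfl; exact hg.2 hg.1
  exact card_le_card_add_one_of_insert_indep hA hmin hij hg.1 hins
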